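/- Let φ be an Orlicz function taking only finite values, satisfying the Δ₂-condition at zero, and such that ∑_{n=n₁}^∞ φ(1/n) < ∞ for some n₁ ∈ ℕ. Then for every sequence (x_n) of elements of ces_φ: ‖x_n‖_φ → 1 if and only if ρ_φ(x_n) → 1. -/

import Mathlib

open scoped ENNReal
open Filter

/-- An Orlicz function: `φ : ℝ → [0,∞]` even, convex, left continuous on `ℝ₊`,
continuous at zero, with `φ 0 = 0` and `φ u → ∞` as `u → ∞`. -/
structure OrliczFunction where
  toFun : ℝ → ℝ≥0∞
  even' : ∀ u : ℝ, toFun (-u) = toFun u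
  convex' : ∀ u v t : ℝ, 0 ≤ t → t ≤ 1 →
    toFun (t * u + (1 - t) * v) ≤ ENNReal.ofReal t * toFun u + ENNReal.ofReal (1 - t) * toFun v
  map_zero' : toFun 0 = 0
  leftContinuous' : ∀ t : ℝ, 0 < t → Tendsto toFun (nhdsWithin t (Set.Iio t)) (nhds (toFun t))
  continuousAtZero' : Tendsto toFun (nhds 0) (nhds 0)
  tendsto_top' : Tendsto toFun atTop (nhds ⊤)

/-- The Cesàro mean `σx(n) = (1/n) ∑_{j=1}^n |x j|` (with `0`-based indexing). -/
noncomputable def cesaroMean (x : ℕ → ℝ) (n : ℕ) : ℝ :=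
  (∑ j ∈ Finset.range (n + 1), |x j|) / (n + 1)

/-- The modular `ρ_φ(x) = ∑_i φ(σx(i))`. -/
noncomputable def rho (φ : OrliczFunction) (x : ℕ → ℝ) : ℝ≥0∞ :=
  ∑' n : ℕ, φ.toFun (cesaroMean x n)

/-- The Cesàro–Orlicz sequence space `ces_φ`. -/
def cesOrlicz (φ : OrliczFunction) : Set (ℕ → ℝ) :=
  {x | ∃ lam : ℝ, 0 < lam ∧ rho φ (fun i => lam * x i) < ⊤}

/-- The Luxemburg norm `‖x‖_φ = inf {λ > 0 : ρ_φ(x/λ) ≤ 1}`. -/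
noncomputable def luxNorm (φ : OrliczFunction) (x : ℕ → ℝ) : ℝ :=
  sInf {lam : ℝ | 0 < lam ∧ rho φ (fun i => x i / lam) ≤ 1}

/-- The subspace `A_φ` of `ces_φ`. -/
def Aphi (φ : OrliczFunction) : Set (ℕ → ℝ) :=
  {x | x ∈ cesOrlicz φ ∧ ∀ k : ℝ, 0 < k → ∃ nk : ℕ,
    ∑' n : ℕ, φ.toFun ((k / ((nk + n + 1 : ℕ) : ℝ)) * ∑ i ∈ Finset.range (nk + n + 1), |x i|) < ⊤}

/-- `∃ n₁, ∑_{n=n₁}^∞ φ(1/n) < ∞`. -/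
def TailFinite (φ : OrliczFunction) : Prop :=
  ∃ n₁ : ℕ, ∑' n : ℕ, φ.toFun (((n₁ + n + 1 : ℕ) : ℝ)⁻¹) < ⊤

/-- The `Δ₂`-condition at zero. -/
def Delta2Zero (φ : OrliczFunction) : Prop :=
  ∃ K : ℝ, 0 < K ∧ ∃ a : ℝ, 0 < a ∧ 0 < φ.toFun a ∧
    ∀ u : ℝ, 0 ≤ u → u ≤ a → φ.toFun (2 * u) ≤ ENNReal.ofReal K * φ.toFun u

/-- `φ` takes only finite values. -/
def FiniteValued (φ : OrliczFunction) : Prop := ∀ u : ℝ, φ.toFun u ≠ ⊤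

/-! Under `Δ₂(0)`, a finite-valued `φ` is doubling on every bounded interval `[0, b]`, and a
modular `ρ_φ(y) ≤ 1` keeps all Cesàro means of `y` in such an interval. Convexity between `u`
and `2u` then gives `ρ_φ(s y) ≤ ((2 - s) + (s - 1) m) ρ_φ(y)` for `1 ≤ s ≤ 2`, so dilating by
a factor close to `1` changes the modular by little. This yields `‖x‖_φ → 1 ⟹ ρ_φ(x) → 1`;
the converse holds for every Orlicz function, since `ρ_φ(x) ≤ ‖x‖_φ` when `‖x‖_φ ≤ 1` and
`‖x‖_φ ≤ ρ_φ(x)` when `ρ_φ(x) ≥ 1`. -/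

namespace OrliczFunction

variable (φ : OrliczFunction)

theorem map_mul_le {t : ℝ} (u : ℝ) (ht0 : 0 ≤ t) (ht1 : t ≤ 1) :
    φ.toFun (t * u) ≤ ENNReal.ofReal t * φ.toFun u := by
  simpa [φ.map_zero'] using φ.convex' u 0 t ht0 ht1

theorem map_le_map {u v : ℝ} (hu : 0 ≤ u) (huv : u ≤ v) : φ.toFun u ≤ φ.toFun v := by
  obtain hv | rfl := (hu.trans huv).lt_or_eq
  · calc φ.toFun u = φ.toFun (u / v * v) := by rw [div_mul_cancel₀ _ hv.ne']
      _ ≤ ENNReal.ofReal (u / v) * φ.toFun v :=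
          φ.map_mul_le v (div_nonneg hu hv.le) ((div_le_one hv).2 huv)
      _ ≤ φ.toFun v := mul_le_of_le_one_left' (ENNReal.ofReal_le_one.2 ((div_le_one hv).2 huv))
  · rw [le_antisymm huv hu]

theorem exists_one_lt_map : ∃ b : ℝ, ∀ u, b ≤ u → 1 < φ.toFun u :=
  eventually_atTop.1 (φ.tendsto_top'.eventually (Ioi_mem_nhds ENNReal.one_lt_top))

theorem map_mul_le_of_doubling {b m : ℝ} (hm : 0 ≤ m)
    (hΔ : ∀ u, 0 ≤ u → u ≤ b → φ.toFun (2 * u) ≤ ENNReal.ofReal m * φ.toFun u)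
    {s u : ℝ} (hs1 : 1 ≤ s) (hs2 : s ≤ 2) (hu0 : 0 ≤ u) (hub : u ≤ b) :
    φ.toFun (s * u) ≤ ENNReal.ofReal ((2 - s) + (s - 1) * m) * φ.toFun u := by
  have hconv := φ.convex' u (2 * u) (2 - s) (by linarith) (by linarith)
  rw [show (2 - s) * u + (1 - (2 - s)) * (2 * u) = s * u by ring,
    show (1 - (2 - s)) = s - 1 by ring] at hconv
  calc φ.toFun (s * u)
      ≤ ENNReal.ofReal (2 - s) * φ.toFun u + ENNReal.ofReal (s - 1) * φ.toFun (2 * u) := hconv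
    _ ≤ ENNReal.ofReal (2 - s) * φ.toFun u
        + ENNReal.ofReal (s - 1) * (ENNReal.ofReal m * φ.toFun u) := by
        gcongr; exact hΔ u hu0 hub
    _ = ENNReal.ofReal ((2 - s) + (s - 1) * m) * φ.toFun u := by
        rw [ENNReal.ofReal_add (by linarith) (mul_nonneg (by linarith) hm), add_mul,
          ← mul_assoc, ← ENNReal.ofReal_mul (by linarith)]

end OrliczFunction

/-- Below `a` this is the `Δ₂` constant; on `[a, b]` the ratio `φ(2b) / φ(a)` works by
monotonicity, and it is finite because `φ` is finite-valued and `φ(a) > 0`. -/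
theorem Delta2Zero.exists_doubling_on_Icc {φ : OrliczFunction} (hfin : FiniteValued φ)
    (hδ : Delta2Zero φ) (b : ℝ) : ∃ m : ℝ, 0 ≤ m ∧
      ∀ u, 0 ≤ u → u ≤ b → φ.toFun (2 * u) ≤ ENNReal.ofReal m * φ.toFun u := by
  obtain ⟨K, hK, a, ha, hφa, hΔK⟩ := hδ
  set p := (φ.toFun a).toReal
  set r := (φ.toFun (2 * b)).toReal
  have hp : 0 < p := ENNReal.toReal_pos hφa.ne' (hfin a)
  refine ⟨max K (r / p), hK.le.trans (le_max_left _ _), fun u hu hub => ?_⟩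
  rcases le_or_gt u a with hua | hau
  · calc φ.toFun (2 * u) ≤ ENNReal.ofReal K * φ.toFun u := hΔK u hu hua
      _ ≤ ENNReal.ofReal (max K (r / p)) * φ.toFun u := by gcongr; exact le_max_left _ _
  · calc φ.toFun (2 * u) ≤ φ.toFun (2 * b) := φ.map_le_map (by linarith) (by linarith)
      _ = ENNReal.ofReal (r / p) * ENNReal.ofReal p := by
          rw [← ENNReal.ofReal_mul (by positivity), div_mul_cancel₀ _ hp.ne',
            ENNReal.ofReal_toReal (hfin _)]
      _ ≤ ENNReal.ofReal (max K (r / p)) * φ.toFun u := by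
          rw [ENNReal.ofReal_toReal (hfin a)]
          gcongr
          · exact le_max_right _ _
          · exact φ.map_le_map ha.le hau.le

theorem cesaroMean_nonneg (x : ℕ → ℝ) (n : ℕ) : 0 ≤ cesaroMean x n := by
  unfold cesaroMean
  positivity

theorem cesaroMean_const_mul {c : ℝ} (hc : 0 ≤ c) (x : ℕ → ℝ) (n : ℕ) :
    cesaroMean (fun i => c * x i) n = c * cesaroMean x n := by
  simp only [cesaroMean, abs_mul, abs_of_nonneg hc, ← Finset.mul_sum, mul_div_assoc]

section Modular

variable {φ : OrliczFunction}

theorem cesaroMean_le_of_rho_le_one {b : ℝ} (hb : ∀ u, b ≤ u → 1 < φ.toFun u)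
    {y : ℕ → ℝ} (hy : rho φ y ≤ 1) (n : ℕ) : cesaroMean y n ≤ b := by
  by_contra! hn
  exact (hb _ hn.le).not_ge ((ENNReal.le_tsum n).trans hy)

theorem rho_const_mul_le {t : ℝ} (x : ℕ → ℝ) (ht0 : 0 ≤ t) (ht1 : t ≤ 1) :
    rho φ (fun i => t * x i) ≤ ENNReal.ofReal t * rho φ x := by
  rw [rho, rho, ← ENNReal.tsum_mul_left]
  refine ENNReal.tsum_le_tsum fun n => ?_
  rw [cesaroMean_const_mul ht0]
  exact φ.map_mul_le _ ht0 ht1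

theorem rho_const_mul_le_of_doubling {b m : ℝ} (hm : 0 ≤ m)
    (hΔ : ∀ u, 0 ≤ u → u ≤ b → φ.toFun (2 * u) ≤ ENNReal.ofReal m * φ.toFun u)
    {s : ℝ} (hs1 : 1 ≤ s) (hs2 : s ≤ 2) {x : ℕ → ℝ} (hx : ∀ n, cesaroMean x n ≤ b) :
    rho φ (fun i => s * x i) ≤ ENNReal.ofReal ((2 - s) + (s - 1) * m) * rho φ x := by
  rw [rho, rho, ← ENNReal.tsum_mul_left]
  refine ENNReal.tsum_le_tsum fun n => ?_
  rw [cesaroMean_const_mul (by linarith)]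
  exact φ.map_mul_le_of_doubling hm hΔ hs1 hs2 (cesaroMean_nonneg x n) (hx n)

end Modular

theorem exists_doubling_factor_le {m r : ℝ} (hm : 0 ≤ m) (hr : 1 < r) :
    ∃ s : ℝ, 1 < s ∧ s ≤ 2 ∧ (2 - s) + (s - 1) * m ≤ r := by
  set η := min 1 ((r - 1) / (m + 1))
  have hη0 : 0 < η := lt_min one_pos (div_pos (by linarith) (by linarith))
  have hη1 : η ≤ 1 := min_le_left _ _
  have hηm : η * (m + 1) ≤ r - 1 := (le_div_iff₀ (by linarith)).1 (min_le_right _ _)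
  exact ⟨1 + η, by linarith, by linarith, by nlinarith⟩

section LuxemburgNorm

variable {φ : OrliczFunction} {x : ℕ → ℝ}

theorem luxNorm_nonneg (x : ℕ → ℝ) : 0 ≤ luxNorm φ x :=
  Real.sInf_nonneg fun _ hlam => hlam.1.le

theorem luxNorm_le {lam : ℝ} (hlam : 0 < lam) (h : rho φ (fun i => x i / lam) ≤ 1) :
    luxNorm φ x ≤ lam :=
  csInf_le ⟨0, fun _ hmu => hmu.1.le⟩ ⟨hlam, h⟩

theorem exists_rho_div_le_one (hx : x ∈ cesOrlicz φ) :
    ∃ lam : ℝ, 0 < lam ∧ rho φ (fun i => x i / lam) ≤ 1 := by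
  obtain ⟨c, hc, hR⟩ := hx
  set R := rho φ (fun i => c * x i)
  set t : ℝ := min 1 (1 / (R.toReal + 1))
  have ht0 : 0 < t := lt_min one_pos (by positivity)
  refine ⟨(t * c)⁻¹, by positivity, ?_⟩
  have hdiv : (fun i => x i / (t * c)⁻¹) = fun i => t * (c * x i) := by
    funext i
    rw [div_inv_eq_mul]
    ring
  rw [hdiv]
  calc rho φ (fun i => t * (c * x i)) ≤ ENNReal.ofReal t * R :=
        rho_const_mul_le _ ht0.le (min_le_left _ _)
    _ ≤ ENNReal.ofReal (1 / (R.toReal + 1)) * ENNReal.ofReal R.toReal := by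
        rw [ENNReal.ofReal_toReal hR.ne]
        gcongr
        exact min_le_right _ _
    _ ≤ 1 := by
        rw [← ENNReal.ofReal_mul (by positivity), ENNReal.ofReal_le_one, one_div_mul_eq_div,
          div_le_one (by positivity)]
        linarith

theorem rho_div_le_one_of_luxNorm_lt (hx : x ∈ cesOrlicz φ) {mu : ℝ} (h : luxNorm φ x < mu) :
    rho φ (fun i => x i / mu) ≤ 1 := by
  obtain ⟨lam, hlam, hlam_le⟩ := exists_rho_div_le_one hx
  obtain ⟨c, ⟨hc, hρc⟩, hcmu⟩ :=
    exists_lt_of_csInf_lt (s := {lam | 0 < lam ∧ rho φ (fun i => x i / lam) ≤ 1})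
      ⟨lam, hlam, hlam_le⟩ h
  have hmu : 0 < mu := hc.trans hcmu
  have hdiv : (fun i => x i / mu) = fun i => c / mu * (x i / c) := by
    funext i
    field_simp
  rw [hdiv]
  calc rho φ (fun i => c / mu * (x i / c))
      ≤ ENNReal.ofReal (c / mu) * rho φ (fun i => x i / c) :=
        rho_const_mul_le _ (by positivity) ((div_le_one hmu).2 hcmu.le)
    _ ≤ 1 := mul_le_one' (ENNReal.ofReal_le_one.2 ((div_le_one hmu).2 hcmu.le)) hρc

theorem rho_le_of_luxNorm_lt (hx : x ∈ cesOrlicz φ) {c : ℝ} (hc : luxNorm φ x < c)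
    (hc1 : c ≤ 1) : rho φ x ≤ ENNReal.ofReal c := by
  have hc0 : 0 < c := (luxNorm_nonneg x).trans_lt hc
  calc rho φ x = rho φ (fun i => c * (x i / c)) := by
        congr 1; funext i; rw [mul_div_cancel₀ _ hc0.ne']
    _ ≤ ENNReal.ofReal c * rho φ (fun i => x i / c) := rho_const_mul_le _ hc0.le hc1
    _ ≤ ENNReal.ofReal c := mul_le_of_le_one_right' (rho_div_le_one_of_luxNorm_lt hx hc)

theorem luxNorm_le_of_rho_le {c : ℝ} (hc1 : 1 ≤ c) (h : rho φ x ≤ ENNReal.ofReal c) :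
    luxNorm φ x ≤ c := by
  have hc0 : 0 < c := one_pos.trans_le hc1
  refine luxNorm_le hc0 ?_
  calc rho φ (fun i => x i / c) = rho φ (fun i => c⁻¹ * x i) := by simp only [div_eq_inv_mul]
    _ ≤ ENNReal.ofReal c⁻¹ * rho φ x :=
        rho_const_mul_le _ (by positivity) (inv_le_one_of_one_le₀ hc1)
    _ ≤ ENNReal.ofReal c⁻¹ * ENNReal.ofReal c := by gcongr
    _ = 1 := by
        rw [← ENNReal.ofReal_mul (by positivity), inv_mul_cancel₀ hc0.ne', ENNReal.ofReal_one]

theorem tendsto_luxNorm_of_tendsto_rho {ι : Type*} {l : Filter ι} {xs : ι → ℕ → ℝ}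
    (hmem : ∀ i, xs i ∈ cesOrlicz φ) (h : Tendsto (fun i => rho φ (xs i)) l (nhds 1)) :
    Tendsto (fun i => luxNorm φ (xs i)) l (nhds 1) := by
  rw [tendsto_order]
  constructor
  · intro q hq
    have hc : ENNReal.ofReal ((q + 1) / 2) < 1 := ENNReal.ofReal_lt_one.2 (by linarith)
    filter_upwards [h.eventually (Ioi_mem_nhds hc)] with i hi
    by_contra! hle
    exact hi.not_ge (rho_le_of_luxNorm_lt (hmem i) (by linarith) (by linarith))
  · intro q hq
    have hc : 1 < ENNReal.ofReal ((q + 1) / 2) := ENNReal.one_lt_ofReal.2 (by linarith)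
    filter_upwards [h.eventually (Iio_mem_nhds hc)] with i hi
    exact (luxNorm_le_of_rho_le (by linarith) hi.le).trans_lt (by linarith)

end LuxemburgNorm

section Doubling

variable {φ : OrliczFunction} {b m : ℝ}

theorem rho_le_of_luxNorm_lt_of_doubling (hm : 0 ≤ m)
    (hΔ : ∀ u, 0 ≤ u → u ≤ b → φ.toFun (2 * u) ≤ ENNReal.ofReal m * φ.toFun u)
    (hb : ∀ u, b ≤ u → 1 < φ.toFun u) {x : ℕ → ℝ} (hx : x ∈ cesOrlicz φ) {s : ℝ}
    (hs1 : 1 ≤ s) (hs2 : s ≤ 2) (h : luxNorm φ x < s) :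
    rho φ x ≤ ENNReal.ofReal ((2 - s) + (s - 1) * m) := by
  have hρ : rho φ (fun i => x i / s) ≤ 1 := rho_div_le_one_of_luxNorm_lt hx h
  calc rho φ x = rho φ (fun i => s * (x i / s)) := by
        congr 1; funext i; rw [mul_div_cancel₀ _ (by positivity)]
    _ ≤ ENNReal.ofReal ((2 - s) + (s - 1) * m) * rho φ (fun i => x i / s) :=
        rho_const_mul_le_of_doubling hm hΔ hs1 hs2 (cesaroMean_le_of_rho_le_one hb hρ)
    _ ≤ ENNReal.ofReal ((2 - s) + (s - 1) * m) := mul_le_of_le_one_right' hρ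

theorem luxNorm_le_inv_of_doubling (hm : 0 ≤ m)
    (hΔ : ∀ u, 0 ≤ u → u ≤ b → φ.toFun (2 * u) ≤ ENNReal.ofReal m * φ.toFun u)
    (hb : ∀ u, b ≤ u → 1 < φ.toFun u) {x : ℕ → ℝ} {s : ℝ} (hs1 : 1 ≤ s) (hs2 : s ≤ 2)
    (hρ : rho φ x ≤ 1) (h : ENNReal.ofReal ((2 - s) + (s - 1) * m) * rho φ x ≤ 1) :
    luxNorm φ x ≤ s⁻¹ := by
  refine luxNorm_le (by positivity) ?_
  simp only [div_inv_eq_mul, mul_comm _ s]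
  exact (rho_const_mul_le_of_doubling hm hΔ hs1 hs2 (cesaroMean_le_of_rho_le_one hb hρ)).trans h

end Doubling

theorem tendsto_rho_of_tendsto_luxNorm {φ : OrliczFunction} (hfin : FiniteValued φ)
    (hδ : Delta2Zero φ) {ι : Type*} {l : Filter ι} {xs : ι → ℕ → ℝ}
    (hmem : ∀ i, xs i ∈ cesOrlicz φ) (h : Tendsto (fun i => luxNorm φ (xs i)) l (nhds 1)) :
    Tendsto (fun i => rho φ (xs i)) l (nhds 1) := by
  obtain ⟨b, hb⟩ := φ.exists_one_lt_map
  obtain ⟨m, hm, hΔ⟩ := hδ.exists_doubling_on_Icc hfin b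
  rw [tendsto_order]
  constructor
  · intro a ha
    obtain ⟨r, -, har, hr1⟩ := ENNReal.lt_iff_exists_real_btwn.1 ha
    rw [ENNReal.ofReal_lt_one] at hr1
    obtain ⟨s, hs1, hs2, hsr⟩ := exists_doubling_factor_le hm (show 1 < 2 - r by linarith)
    filter_upwards [h.eventually (Ioi_mem_nhds (inv_lt_one_of_one_lt₀ hs1))] with i hi
    refine har.trans (lt_of_not_ge fun hle => hi.not_ge ?_)
    -- dilating by `s` multiplies the modular by at most `2 - r`, and `(2 - r) r ≤ 1`
    refine luxNorm_le_inv_of_doubling hm hΔ hb hs1.le hs2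
      (hle.trans (ENNReal.ofReal_le_one.2 hr1.le)) ?_
    calc ENNReal.ofReal ((2 - s) + (s - 1) * m) * rho φ (xs i)
        ≤ ENNReal.ofReal (2 - r) * ENNReal.ofReal r := by gcongr
      _ ≤ 1 := by
          rw [← ENNReal.ofReal_mul (by linarith), ENNReal.ofReal_le_one]
          nlinarith
  · intro a ha
    obtain ⟨r, -, h1r, hra⟩ := ENNReal.lt_iff_exists_real_btwn.1 ha
    rw [ENNReal.one_lt_ofReal] at h1r
    obtain ⟨s, hs1, hs2, hsr⟩ := exists_doubling_factor_le hm h1r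
    filter_upwards [h.eventually (Iio_mem_nhds hs1)] with i hi
    exact (rho_le_of_luxNorm_lt_of_doubling hm hΔ hb (hmem i) hs1.le hs2 hi).trans_lt
      ((ENNReal.ofReal_le_ofReal hsr).trans_lt hra)

theorem stmt_15_general (φ : OrliczFunction) (hfin : FiniteValued φ) (hδ : Delta2Zero φ)
    (xs : ℕ → ℕ → ℝ) (hmem : ∀ n, xs n ∈ cesOrlicz φ) :
    Tendsto (fun n => luxNorm φ (xs n)) atTop (nhds 1) ↔
      Tendsto (fun n => rho φ (xs n)) atTop (nhds 1) :=
  ⟨tendsto_rho_of_tendsto_luxNorm hfin hδ hmem, tendsto_luxNorm_of_tendsto_rho hmem⟩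

/-- if `φ ∈ Δ₂(0)` then `‖x_n‖_φ → 1 ↔ ρ_φ(x_n) → 1`. -/
theorem stmt_15 (φ : OrliczFunction) (hfin : FiniteValued φ) (hδ : Delta2Zero φ)
    (htail : TailFinite φ) (xs : ℕ → ℕ → ℝ) (hmem : ∀ n, xs n ∈ cesOrlicz φ) :
    Tendsto (fun n => luxNorm φ (xs n)) atTop (nhds 1) ↔
      Tendsto (fun n => rho φ (xs n)) atTop (nhds 1) :=
  stmt_15_general φ hfin hδ xs hmem
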